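/- arXiv:2303.15588 — 2 statements merged into one kernel-verified Lean document; each statement's English description precedes it below -/
import Mathlib

section
/- Let A ∈ ℝ^{m×n}, b ∈ ℝ^m, λ > 0, and let x̄ ∈ ℝⁿ and ȳ ∈ ℝ^m. Then the following are equivalent: (i) x̄ is a solution of the SR-LASSO and ȳ maximizes ⟨b, y⟩ over the set {y ∈ ℝ^m : ‖Aᵀy‖_∞ ≤ λ and ‖y‖₂ ≤ 1}; (ii) ‖Ax̄ − b‖₂ + λ‖x̄‖₁ = ⟨b, ȳ⟩, ‖Aᵀȳ‖_∞ ≤ λ, and ‖ȳ‖₂ ≤ 1. -/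
/-!
Weak duality is Cauchy–Schwarz plus Hölder: for dual feasible `y`,
`⟨b, y⟩ = ⟨b - Ax, y⟩ + ⟨x, Aᵀy⟩ ≤ ‖Ax - b‖₂ + λ‖x‖₁`.

For strong duality let `p = f(x̄)` be the optimal value. The right-hand sides `a` for which
`f_{A,a,λ}(x) < p` for some `x` form an open convex set not containing `b`, so some `y` strictly
separates `b` from it. Testing the separation on `a = t • y / ‖y‖₂` (with `x = 0`) and on
`a = A (t/λ) eᵢ` (with `x = (t/λ) eᵢ`) for `t < p` bounds `p‖y‖₂` and `p‖Aᵀy‖_∞ / λ` by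
`⟨b, y⟩`, so `(p / ⟨b, y⟩) • y` is dual feasible with value `p`.
-/

open Matrix Filter Topology
open scoped BigOperators Classical

noncomputable def l2 {k : ℕ} (x : Fin k → ℝ) : ℝ := Real.sqrt (∑ i, (x i) ^ 2)

noncomputable def l1 {k : ℕ} (x : Fin k → ℝ) : ℝ := ∑ i, |x i|

noncomputable def linf {k : ℕ} (x : Fin k → ℝ) : ℝ := sSup (Set.range fun i => |x i|)

noncomputable def dotp {k : ℕ} (x y : Fin k → ℝ) : ℝ := ∑ i, x i * y i

noncomputable def pinv {m s : ℕ} (M : Matrix (Fin m) (Fin s) ℝ) :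
    Matrix (Fin s) (Fin m) ℝ := (Mᵀ * M)⁻¹ * Mᵀ

/-- The SR-LASSO objective f_{A,b,λ}(x) := ‖Ax − b‖₂ + λ‖x‖₁. -/
noncomputable def srObj {m n : ℕ} (A : Matrix (Fin m) (Fin n) ℝ) (b : Fin m → ℝ)
    (lam : ℝ) (x : Fin n → ℝ) : ℝ := l2 (A.mulVec x - b) + lam * l1 x

/-- x is a solution of the SR-LASSO with data (A, b, λ). -/
def IsSol {m n : ℕ} (A : Matrix (Fin m) (Fin n) ℝ) (b : Fin m → ℝ) (lam : ℝ)
    (x : Fin n → ℝ) : Prop := ∀ w : Fin n → ℝ, srObj A b lam x ≤ srObj A b lam w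

/-- y is feasible for the SR-LASSO dual: ‖Aᵀy‖_∞ ≤ λ and ‖y‖₂ ≤ 1. -/
noncomputable def DualFeas {m n : ℕ} (A : Matrix (Fin m) (Fin n) ℝ) (lam : ℝ)
    (y : Fin m → ℝ) : Prop := linf (Aᵀ.mulVec y) ≤ lam ∧ l2 y ≤ 1

/-- y is a solution of the SR-LASSO dual: it is feasible and maximizes ⟨b, ·⟩
over the feasible set. -/
noncomputable def IsDualSol {m n : ℕ} (A : Matrix (Fin m) (Fin n) ℝ) (b : Fin m → ℝ)
    (lam : ℝ) (y : Fin m → ℝ) : Prop :=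
  DualFeas A lam y ∧ ∀ y' : Fin m → ℝ, DualFeas A lam y' → dotp b y' ≤ dotp b y

section Norms

variable {k : ℕ}

lemma l2_eq_norm (x : Fin k → ℝ) : l2 x = ‖WithLp.toLp 2 x‖ := by
  simp [l2, EuclideanSpace.norm_eq]

lemma l1_eq_norm (x : Fin k → ℝ) : l1 x = ‖WithLp.toLp 1 x‖ := by
  simp [l1, PiLp.norm_eq_of_L1]

lemma l2_nonneg (x : Fin k → ℝ) : 0 ≤ l2 x := by
  rw [l2_eq_norm]; exact norm_nonneg _

lemma l1_nonneg (x : Fin k → ℝ) : 0 ≤ l1 x := by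
  rw [l1_eq_norm]; exact norm_nonneg _

lemma l2_smul (t : ℝ) (x : Fin k → ℝ) : l2 (t • x) = |t| * l2 x := by
  rw [l2_eq_norm, l2_eq_norm, WithLp.toLp_smul, norm_smul, Real.norm_eq_abs]

lemma l1_smul (t : ℝ) (x : Fin k → ℝ) : l1 (t • x) = |t| * l1 x := by
  rw [l1_eq_norm, l1_eq_norm, WithLp.toLp_smul, norm_smul, Real.norm_eq_abs]

lemma l2_add_le (x y : Fin k → ℝ) : l2 (x + y) ≤ l2 x + l2 y := by
  simpa only [l2_eq_norm, WithLp.toLp_add] using norm_add_le _ _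

lemma l1_add_le (x y : Fin k → ℝ) : l1 (x + y) ≤ l1 x + l1 y := by
  simpa only [l1_eq_norm, WithLp.toLp_add] using norm_add_le _ _

lemma l2_neg (x : Fin k → ℝ) : l2 (-x) = l2 x := by
  simpa using l2_smul (-1) x

lemma l1_single (i : Fin k) (t : ℝ) : l1 (Pi.single i t) = |t| := by
  rw [l1, Finset.sum_eq_single i (fun j _ hj => by simp [hj]) (by simp)]
  simp

lemma continuous_l2 : Continuous (l2 : (Fin k → ℝ) → ℝ) := by
  unfold l2; fun_prop

lemma dotp_self (x : Fin k → ℝ) : dotp x x = l2 x ^ 2 := by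
  rw [l2, Real.sq_sqrt (Finset.sum_nonneg fun i _ => sq_nonneg _)]
  simp [dotp, sq]

lemma dotp_le_l2_mul_l2 (x y : Fin k → ℝ) : dotp x y ≤ l2 x * l2 y := by
  have h := real_inner_le_norm (WithLp.toLp 2 y : EuclideanSpace ℝ (Fin k)) (WithLp.toLp 2 x)
  rw [EuclideanSpace.inner_eq_star_dotProduct] at h
  rw [mul_comm, ← l2_eq_norm, ← l2_eq_norm] at h
  exact (by simpa using h : x ⬝ᵥ y ≤ l2 x * l2 y)

lemma abs_le_linf (x : Fin k → ℝ) (i : Fin k) : |x i| ≤ linf x :=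
  le_csSup (Set.finite_range _).bddAbove ⟨i, rfl⟩

lemma linf_le {x : Fin k → ℝ} {c : ℝ} (hc : 0 ≤ c) (h : ∀ i, |x i| ≤ c) : linf x ≤ c := by
  rcases isEmpty_or_nonempty (Fin k) with hk | hk
  · simpa [linf, Set.range_eq_empty] using hc
  · exact csSup_le (Set.range_nonempty _) (Set.forall_mem_range.2 h)

lemma dotp_le_l1_mul_linf (x y : Fin k → ℝ) : dotp x y ≤ l1 x * linf y := by
  rw [dotp, l1, Finset.sum_mul]
  refine Finset.sum_le_sum fun i _ => ?_
  calc x i * y i ≤ |x i| * |y i| := by rw [← abs_mul]; exact le_abs_self _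
    _ ≤ |x i| * linf y := by gcongr; exact abs_le_linf y i

end Norms

lemma dotp_mulVec {m n : ℕ} (A : Matrix (Fin m) (Fin n) ℝ) (x : Fin n → ℝ) (y : Fin m → ℝ) :
    dotp (A *ᵥ x) y = dotp x (Aᵀ *ᵥ y) := by
  change (A *ᵥ x) ⬝ᵥ y = x ⬝ᵥ (Aᵀ *ᵥ y)
  rw [dotProduct_mulVec, vecMul_transpose, dotProduct_comm]

lemma exists_dotp_eq {k : ℕ} (f : (Fin k → ℝ) →L[ℝ] ℝ) : ∃ y, ∀ a, f a = dotp a y :=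
  ⟨fun i => f fun j => if i = j then 1 else 0, fun a => by
    simpa only [dotp, smul_eq_mul, ContinuousLinearMap.coe_coe] using
      f.toLinearMap.pi_apply_eq_sum_univ a⟩

lemma mul_le_of_forall_mul_lt {p c β : ℝ} (hp : 0 < p) (h : ∀ t, 0 ≤ t → t < p → t * c < β) :
    p * c ≤ β := by
  have hβ : 0 < β := by simpa using h 0 le_rfl hp
  by_contra! hlt
  have hc : 0 < c := pos_of_mul_pos_right (hβ.trans hlt) hp.le
  have := h (β / c) (by positivity) ((div_lt_iff₀ hc).2 hlt)
  rw [div_mul_cancel₀ _ hc.ne'] at this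
  exact lt_irrefl _ this

section SRLasso

variable {m n : ℕ} (A : Matrix (Fin m) (Fin n) ℝ) {lam : ℝ}

lemma srObj_nonneg (hlam : 0 ≤ lam) (b : Fin m → ℝ) (x : Fin n → ℝ) : 0 ≤ srObj A b lam x :=
  add_nonneg (l2_nonneg _) (mul_nonneg hlam (l1_nonneg _))

lemma dualFeas_zero (hlam : 0 ≤ lam) : DualFeas A lam 0 :=
  ⟨linf_le hlam fun i => by simp [hlam], by simp [l2]⟩

lemma dotp_le_srObj (b : Fin m → ℝ) (x : Fin n → ℝ) {y : Fin m → ℝ} (hy : DualFeas A lam y) :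
    dotp b y ≤ srObj A b lam x := by
  have hsplit : dotp b y = dotp (b - A *ᵥ x) y + dotp x (Aᵀ *ᵥ y) := by
    rw [← dotp_mulVec]; simp only [dotp, Pi.sub_apply, sub_mul, Finset.sum_sub_distrib]; ring
  have hres : dotp (b - A *ᵥ x) y ≤ l2 (A *ᵥ x - b) := by
    calc dotp (b - A *ᵥ x) y ≤ l2 (b - A *ᵥ x) * l2 y := dotp_le_l2_mul_l2 _ _
      _ ≤ l2 (b - A *ᵥ x) := mul_le_of_le_one_right (l2_nonneg _) hy.2
      _ = l2 (A *ᵥ x - b) := by rw [← l2_neg, neg_sub]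
  have hreg : dotp x (Aᵀ *ᵥ y) ≤ lam * l1 x := by
    calc dotp x (Aᵀ *ᵥ y) ≤ l1 x * linf (Aᵀ *ᵥ y) := dotp_le_l1_mul_linf _ _
      _ ≤ lam * l1 x := by rw [mul_comm]; exact mul_le_mul_of_nonneg_right hy.1 (l1_nonneg _)
  rw [hsplit, srObj]
  exact add_le_add hres hreg

lemma srObj_smul_add_smul_le (hlam : 0 ≤ lam) (a a' : Fin m → ℝ) (x x' : Fin n → ℝ) {θ τ : ℝ}
    (hθ : 0 ≤ θ) (hτ : 0 ≤ τ) :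
    srObj A (θ • a + τ • a') lam (θ • x + τ • x') ≤
      θ * srObj A a lam x + τ * srObj A a' lam x' := by
  have hres : A *ᵥ (θ • x + τ • x') - (θ • a + τ • a') =
      θ • (A *ᵥ x - a) + τ • (A *ᵥ x' - a') := by
    rw [mulVec_add, mulVec_smul, mulVec_smul, smul_sub, smul_sub]; abel
  have h2 := l2_add_le (θ • (A *ᵥ x - a)) (τ • (A *ᵥ x' - a'))
  have h1 := l1_add_le (θ • x) (τ • x')
  rw [l2_smul, l2_smul, abs_of_nonneg hθ, abs_of_nonneg hτ] at h2
  rw [l1_smul, l1_smul, abs_of_nonneg hθ, abs_of_nonneg hτ] at h1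
  simp only [srObj, hres]
  nlinarith [mul_le_mul_of_nonneg_left h1 hlam]

lemma convex_setOf_exists_srObj_lt (hlam : 0 ≤ lam) (p : ℝ) :
    Convex ℝ {a | ∃ x, srObj A a lam x < p} := by
  rw [convex_iff_forall_pos]
  rintro a ⟨x, hx⟩ a' ⟨x', hx'⟩ θ τ hθ hτ hθτ
  refine ⟨θ • x + τ • x', (srObj_smul_add_smul_le A hlam a a' x x' hθ.le hτ.le).trans_lt ?_⟩
  calc θ * srObj A a lam x + τ * srObj A a' lam x' < θ * p + τ * p := by gcongr
    _ = p := by rw [← add_mul, hθτ, one_mul]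

lemma isOpen_setOf_exists_srObj_lt (p : ℝ) : IsOpen {a | ∃ x, srObj A a lam x < p} := by
  rw [Set.ofPred_exists]
  exact isOpen_iUnion fun x => isOpen_lt
    ((continuous_l2.comp (continuous_const.sub continuous_id)).add continuous_const)
    continuous_const

lemma exists_dotp_lt_of_isSol (hlam : 0 ≤ lam) {b : Fin m → ℝ} {xbar : Fin n → ℝ}
    (hx : IsSol A b lam xbar) :
    ∃ y, ∀ a x, srObj A a lam x < srObj A b lam xbar → dotp a y < dotp b y := by
  obtain ⟨f, hf⟩ := geometric_hahn_banach_open_point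
    (convex_setOf_exists_srObj_lt A hlam (srObj A b lam xbar))
    (isOpen_setOf_exists_srObj_lt A _) fun ⟨x, hlt⟩ => (hx x).not_gt hlt
  obtain ⟨y, hy⟩ := exists_dotp_eq f
  exact ⟨y, fun a x hlt => by simpa only [hy] using hf a ⟨x, hlt⟩⟩

variable {p β : ℝ} {y : Fin m → ℝ}

lemma pos_of_forall_srObj_lt_imp_dotp_lt (hp : 0 < p)
    (h : ∀ a x, srObj A a lam x < p → dotp a y < β) : 0 < β := by
  have h0 : srObj A 0 lam 0 = 0 := by simp [srObj, l2, l1]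
  simpa [dotp] using h 0 0 (h0 ▸ hp)

lemma mul_l2_le_of_forall_dotp_lt (hp : 0 < p)
    (h : ∀ a x, srObj A a lam x < p → dotp a y < β) : p * l2 y ≤ β := by
  refine mul_le_of_forall_mul_lt hp fun t ht htp => ?_
  have hval : srObj A (t • (l2 y)⁻¹ • y) lam 0 ≤ t := by
    simp only [srObj, mulVec_zero, zero_sub, l2_neg, l2_smul, smul_smul, abs_mul,
      abs_of_nonneg ht, abs_of_nonneg (inv_nonneg.2 (l2_nonneg y)), mul_assoc]
    simp [l1, mul_le_of_le_one_right ht (inv_mul_le_one)]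
  have hdot : dotp (t • (l2 y)⁻¹ • y) y = t * l2 y := by
    simp only [dotp, Pi.smul_apply, smul_eq_mul, mul_assoc, ← Finset.mul_sum]
    rw [← dotp, dotp_self, sq, ← mul_assoc (l2 y)⁻¹, inv_mul_mul_self]
  exact hdot ▸ h _ _ (hval.trans_lt htp)

lemma mul_mulVec_le_of_forall_dotp_lt (hlam : 0 < lam) (hp : 0 < p)
    (h : ∀ a x, srObj A a lam x < p → dotp a y < β) (i : Fin n) {σ : ℝ} (hσ : |σ| = 1) :
    p * (σ * (Aᵀ *ᵥ y) i) ≤ lam * β := by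
  rw [← div_le_iff₀' hlam, mul_div_assoc]
  refine mul_le_of_forall_mul_lt hp fun t ht htp => ?_
  have hval : srObj A (A *ᵥ Pi.single i (t * σ / lam)) lam (Pi.single i (t * σ / lam)) = t := by
    rw [srObj, sub_self, l1_single, abs_div, abs_mul, hσ, abs_of_nonneg ht, abs_of_pos hlam]
    simp [l2, mul_div_cancel₀ _ hlam.ne']
  have hdot : dotp (A *ᵥ Pi.single i (t * σ / lam)) y = t * (σ * (Aᵀ *ᵥ y) i / lam) := by
    rw [dotp_mulVec]
    change Pi.single i _ ⬝ᵥ _ = _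
    rw [single_dotProduct]; ring
  exact hdot ▸ h _ _ (hval.trans_lt htp)

lemma dualFeas_smul_of_forall_dotp_lt (hlam : 0 < lam) (hp : 0 < p)
    (h : ∀ a x, srObj A a lam x < p → dotp a y < β) : DualFeas A lam ((p / β) • y) := by
  have hβ := pos_of_forall_srObj_lt_imp_dotp_lt A hp h
  refine ⟨linf_le hlam.le fun i => ?_, ?_⟩
  · have h1 := mul_mulVec_le_of_forall_dotp_lt A hlam hp h i (σ := 1) (by simp)
    have h2 := mul_mulVec_le_of_forall_dotp_lt A hlam hp h i (σ := -1) (by simp)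
    rw [mulVec_smul, Pi.smul_apply, smul_eq_mul, abs_mul, abs_of_nonneg (by positivity),
      div_mul_eq_mul_div, div_le_iff₀ hβ]
    rcases abs_cases ((Aᵀ *ᵥ y) i) with ⟨hz, -⟩ | ⟨hz, -⟩ <;> rw [hz] <;> linarith
  · rw [l2_smul, abs_of_nonneg (by positivity), div_mul_eq_mul_div, div_le_one hβ]
    exact mul_l2_le_of_forall_dotp_lt A hp h

theorem exists_dualFeas_dotp_eq_srObj (hlam : 0 < lam) {b : Fin m → ℝ} {xbar : Fin n → ℝ}
    (hx : IsSol A b lam xbar) : ∃ y, DualFeas A lam y ∧ dotp b y = srObj A b lam xbar := by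
  rcases (srObj_nonneg A hlam.le b xbar).eq_or_lt with hp | hp
  · refine ⟨0, dualFeas_zero A hlam.le, ?_⟩
    rw [← hp]; simp [dotp]
  obtain ⟨y, hy⟩ := exists_dotp_lt_of_isSol A hlam.le hx
  have hβ := pos_of_forall_srObj_lt_imp_dotp_lt A hp hy
  refine ⟨_, dualFeas_smul_of_forall_dotp_lt A hlam hp hy, ?_⟩
  simp only [dotp, Pi.smul_apply, smul_eq_mul, mul_left_comm _ (_ / _), ← Finset.mul_sum]
  exact div_mul_cancel₀ _ hβ.ne'

end SRLasso

/-- strong duality characterization: (x̄ solves the SR-LASSO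
and ȳ solves its dual) iff (the primal objective at x̄ equals ⟨b, ȳ⟩ and ȳ is
dual feasible). -/
theorem stmt_4 {m n : ℕ} (A : Matrix (Fin m) (Fin n) ℝ) (b : Fin m → ℝ)
    (lam : ℝ) (hlam : 0 < lam) (xbar : Fin n → ℝ) (ybar : Fin m → ℝ) :
    (IsSol A b lam xbar ∧ IsDualSol A b lam ybar)
      ↔ (l2 (A.mulVec xbar - b) + lam * l1 xbar = dotp b ybar ∧
          linf (Aᵀ.mulVec ybar) ≤ lam ∧ l2 ybar ≤ 1) := by
  change _ ↔ srObj A b lam xbar = dotp b ybar ∧ DualFeas A lam ybar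
  constructor
  · rintro ⟨hx, hy, hmax⟩
    obtain ⟨y, hyfeas, hyval⟩ := exists_dualFeas_dotp_eq_srObj A hlam hx
    exact ⟨le_antisymm (hyval ▸ hmax y hyfeas) (dotp_le_srObj A b xbar hy), hy⟩
  · rintro ⟨hval, hy⟩
    exact ⟨fun w => hval ▸ dotp_le_srObj A b w hy,
      hy, fun y' hy' => hval ▸ dotp_le_srObj A b xbar hy'⟩
end

section
/- Let A ∈ ℝ^{m×n}, b ∈ ℝ^m, λ > 0, and let x̄ be a solution of the SR-LASSO with I := supp(x̄) satisfying the strong assumption: (i) ker A_I = {0} and b ∉ range(A_I); (ii) ‖A_{I^C}ᵀ(b − Ax̄)‖_∞ < λ‖Ax̄ − b‖₂. Then the intermediate assumption holds at x̄: Ax̄ ≠ b, and with ȳ := (b − Ax̄)/‖Ax̄ − b‖₂ and J := {i ∈ {1,…,n} : |Aᵢᵀȳ| = λ}, one has ker A_J = {0} and b ∉ range(A_J). Moreover J = I. -/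
open Matrix Filter Topology
open scoped BigOperators Classical

lemma arith_zero (e K δ : ℝ) (hδ : 0 < δ) (hK : 0 ≤ K)
    (h : ∀ t : ℝ, |t| < δ → 0 ≤ t * e + t ^ 2 * K) : e = 0 := by
  by_contra he
  have habs : 0 < |e| := abs_pos.mpr he
  set ε : ℝ := min (δ / (2 * |e|)) (1 / (2 * (K + 1))) with hε
  have hε0 : 0 < ε := lt_min (by positivity) (by positivity)
  have hεle1 : ε ≤ 1 / (2 * (K + 1)) := min_le_right _ _
  have hεle2 : ε ≤ δ / (2 * |e|) := min_le_left _ _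
  have ht : |(-e * ε)| < δ := by
    rw [abs_mul, abs_neg, abs_of_pos hε0]
    have h1 : |e| * ε ≤ |e| * (δ / (2 * |e|)) := by nlinarith
    have h2 : |e| * (δ / (2 * |e|)) = δ / 2 := by field_simp
    linarith
  have hmain := h (-e * ε) ht
  have hKε : ε * K ≤ 1 / 2 := by
    have h3 : K / (2 * (K + 1)) ≤ 1 / 2 := by
      rw [div_le_div_iff₀ (by positivity) (by norm_num)]; nlinarith
    have h4 : ε * K ≤ (1 / (2 * (K + 1))) * K := by nlinarith
    have h5 : (1 / (2 * (K + 1))) * K = K / (2 * (K + 1)) := by ring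
    linarith [h4, h5 ▸ h3]
  have he2 : 0 < e ^ 2 := by positivity
  have hsq : e ^ 2 * ε > 0 := by positivity
  nlinarith [hmain, hsq, hKε]

lemma sqrt_quad_le (N x : ℝ) (hN : 0 < N) (hx : 0 ≤ N ^ 2 + x) :
    Real.sqrt (N ^ 2 + x) ≤ N + x / (2 * N) := by
  have hc : x / (2 * N) * (2 * N) = x := by field_simp
  have hrhs : 0 ≤ N + x / (2 * N) := by nlinarith
  have expand : (N + x / (2 * N)) ^ 2 = N ^ 2 + x + (x / (2 * N)) ^ 2 := by
    field_simp; ring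
  have hle : N ^ 2 + x ≤ (N + x / (2 * N)) ^ 2 := by
    rw [expand]; nlinarith [sq_nonneg (x / (2 * N))]
  calc Real.sqrt (N ^ 2 + x) ≤ Real.sqrt ((N + x / (2 * N)) ^ 2) :=
        Real.sqrt_le_sqrt hle
    _ = N + x / (2 * N) := Real.sqrt_sq hrhs

lemma key_lemma {m n : ℕ} (A : Matrix (Fin m) (Fin n) ℝ) (b : Fin m → ℝ) (lam : ℝ) (hlam : 0 < lam)
    (xbar : Fin n → ℝ) (hsol : IsSol A b lam xbar) (i : Fin n) (hi : xbar i ≠ 0)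
    (hN : 0 < l2 (A.mulVec xbar - b)) :
    |Aᵀ.mulVec (b - A.mulVec xbar) i| = lam * l2 (A.mulVec xbar - b) := by
  set N : ℝ := l2 (A.mulVec xbar - b) with hNdef
  set c : Fin m → ℝ := fun j => A j i with hc
  set d : ℝ := ∑ j, (A.mulVec xbar - b) j * c j with hd
  set C : ℝ := ∑ j, (c j) ^ 2 with hC
  set s : ℝ := if 0 < xbar i then (1 : ℝ) else -1 with hs
  have hNne : N ≠ 0 := ne_of_gt hN
  have hNsq : N ^ 2 = ∑ j, ((A.mulVec xbar - b) j) ^ 2 := by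
    rw [hNdef]; unfold l2; exact Real.sq_sqrt (by positivity)
  have hCnn : 0 ≤ C := Finset.sum_nonneg fun j _ => sq_nonneg _
  have habs_s : |s| = 1 := by
    rw [hs]; split_ifs <;> simp
  -- the perturbation inequality
  have hmain : ∀ t : ℝ, |t| < |xbar i| → 0 ≤ t * (d / N + lam * s) + t ^ 2 * (C / (2 * N)) := by
    intro t ht
    set w : Fin n → ℝ := fun j => xbar j + (if j = i then t else 0) with hw
    have hAw : ∀ j, A.mulVec w j = A.mulVec xbar j + t * c j := by
      intro j
      simp only [Matrix.mulVec, dotProduct, hw, mul_add, Finset.sum_add_distrib, mul_ite,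
        mul_zero]
      rw [Finset.sum_ite_eq' Finset.univ i (fun k => A j k * t)]
      simp [hc, mul_comm]
    have habs_t : |xbar i + t| = |xbar i| + s * t := by
      rcases hi.lt_or_gt with hneg | hpos
      · have hs' : s = -1 := by rw [hs]; simp [not_lt_of_gt hneg]
        have h1 : |xbar i| = -xbar i := abs_of_neg hneg
        have h2 : xbar i + t < 0 := by
          have := (abs_lt.mp ht).2; rw [h1] at this; linarith
        rw [abs_of_neg h2, hs', h1]; ring
      · have hs' : s = 1 := by rw [hs]; simp [hpos]
        have h1 : |xbar i| = xbar i := abs_of_pos hpos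
        have h2 : 0 < xbar i + t := by
          have := (abs_lt.mp ht).1; rw [h1] at this; linarith
        rw [abs_of_pos h2, hs', h1]; ring
    have hl1 : l1 w = l1 xbar + s * t := by
      unfold l1
      have hterm : ∀ j, |w j| = |xbar j| + (if j = i then s * t else 0) := by
        intro j
        by_cases h : j = i
        · subst h; simp [hw, habs_t]
        · simp [hw, h]
      simp only [hterm, Finset.sum_add_distrib]
      rw [Finset.sum_ite_eq' Finset.univ i (fun _ => s * t)]
      simp
    have hsum : ∑ j, ((A.mulVec w - b) j) ^ 2 = N ^ 2 + (2 * t * d + t ^ 2 * C) := by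
      have hterm : ∀ j, ((A.mulVec w - b) j) ^ 2 =
          ((A.mulVec xbar - b) j) ^ 2 + (2 * t) * ((A.mulVec xbar - b) j * c j)
            + t ^ 2 * (c j) ^ 2 := by
        intro j; simp only [Pi.sub_apply, hAw j]; ring
      simp only [hterm, Finset.sum_add_distrib, ← Finset.mul_sum]
      rw [← hNsq, ← hd, ← hC]; ring
    have hXnn : 0 ≤ N ^ 2 + (2 * t * d + t ^ 2 * C) := by
      rw [← hsum]; positivity
    have hsqle : l2 (A.mulVec w - b) ≤ N + (2 * t * d + t ^ 2 * C) / (2 * N) := by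
      unfold l2
      rw [hsum]
      exact sqrt_quad_le N _ hN hXnn
    have hopt := hsol w
    unfold srObj at hopt
    rw [hl1, ← hNdef] at hopt
    have h6 : N + lam * l1 xbar ≤ N + (2 * t * d + t ^ 2 * C) / (2 * N)
        + lam * (l1 xbar + s * t) := le_trans hopt (by linarith)
    have h7 : (2 * t * d + t ^ 2 * C) / (2 * N) = t * (d / N) + t ^ 2 * (C / (2 * N)) := by
      field_simp
    rw [h7] at h6
    nlinarith [h6]
  have hzero : d / N + lam * s = 0 :=
    arith_zero _ _ _ (abs_pos.mpr hi) (by positivity) hmain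
  have hdval : d = -(lam * s) * N := by
    field_simp at hzero
    linarith
  have hATi : Aᵀ.mulVec (b - A.mulVec xbar) i = -d := by
    simp only [Matrix.mulVec, dotProduct, hd, ← Finset.sum_neg_distrib]
    apply Finset.sum_congr rfl
    intro j _
    simp only [Matrix.transpose_apply, Pi.sub_apply, hc]
    ring
  rw [hATi, abs_neg, hdval]
  rw [abs_mul, abs_neg, abs_mul, habs_s, abs_of_pos hN]
  rw [abs_of_pos hlam]; ring

lemma l2_pos {k : ℕ} (x : Fin k → ℝ) (hx : x ≠ 0) : 0 < l2 x := by
  obtain ⟨j, hj⟩ := Function.ne_iff.mp hx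
  have h1 : (x j) ^ 2 ≤ ∑ i, (x i) ^ 2 :=
    Finset.single_le_sum (fun i _ => sq_nonneg (x i)) (Finset.mem_univ j)
  have hj' : x j ≠ 0 := by simpa using hj
  have h2 : 0 < (x j) ^ 2 := pow_two_pos_of_ne_zero hj'
  exact Real.sqrt_pos.mpr (by linarith)

/-- strong implies intermediate, with J = I: if x̄ solves
the SR-LASSO with I := supp(x̄), ker A_I = {0}, b ∉ range A_I, and
‖A_{I^C}ᵀ(b − Ax̄)‖_∞ < λ‖Ax̄ − b‖₂, then Ax̄ ≠ b and, with
ȳ := (b − Ax̄)/‖Ax̄ − b‖₂ and J := {i : |Aᵢᵀȳ| = λ}, one has J = I,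
ker A_J = {0} and b ∉ range A_J. -/
theorem stmt_12 {m n : ℕ} (A : Matrix (Fin m) (Fin n) ℝ) (b : Fin m → ℝ)
    (lam : ℝ) (hlam : 0 < lam) (xbar : Fin n → ℝ)
    (hsol : IsSol A b lam xbar)
    (ybar : Fin m → ℝ)
    (hybar : ybar = (l2 (A.mulVec xbar - b))⁻¹ • (b - A.mulVec xbar))
    -- (i) ker A_I = {0}:
    (hker : ∀ u : Fin n → ℝ, (∀ i, xbar i = 0 → u i = 0) → A.mulVec u = 0 → u = 0)
    -- (i) b ∉ rge A_I:
    (hrge : ¬ ∃ u : Fin n → ℝ, (∀ i, xbar i = 0 → u i = 0) ∧ A.mulVec u = b)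
    -- (ii) ‖A_{I^C}ᵀ(b − Ax̄)‖_∞ < λ‖Ax̄ − b‖₂:
    (hii : ∀ i, xbar i = 0 →
      |Aᵀ.mulVec (b - A.mulVec xbar) i| < lam * l2 (A.mulVec xbar - b)) :
    A.mulVec xbar ≠ b ∧
    {i : Fin n | |Aᵀ.mulVec ybar i| = lam} = {i : Fin n | xbar i ≠ 0} ∧
    (∀ u : Fin n → ℝ,
      (∀ i, |Aᵀ.mulVec ybar i| ≠ lam → u i = 0) → A.mulVec u = 0 → u = 0) ∧
    ¬ ∃ u : Fin n → ℝ,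
      (∀ i, |Aᵀ.mulVec ybar i| ≠ lam → u i = 0) ∧ A.mulVec u = b := by
  have hne : A.mulVec xbar ≠ b := by
    intro h
    exact hrge ⟨xbar, fun i h0 => h0, h⟩
  have hvne : A.mulVec xbar - b ≠ 0 := sub_ne_zero.mpr hne
  have hN : 0 < l2 (A.mulVec xbar - b) := l2_pos _ hvne
  set N : ℝ := l2 (A.mulVec xbar - b) with hNdef
  have hAy : ∀ i, Aᵀ.mulVec ybar i = N⁻¹ * Aᵀ.mulVec (b - A.mulVec xbar) i := by
    intro i
    rw [hybar, Matrix.mulVec_smul]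
    simp [smul_eq_mul]
  have habsAy : ∀ i, |Aᵀ.mulVec ybar i| = N⁻¹ * |Aᵀ.mulVec (b - A.mulVec xbar) i| := by
    intro i
    rw [hAy i, abs_mul, abs_of_pos (inv_pos.mpr hN)]
  have hlt : ∀ i, xbar i = 0 → |Aᵀ.mulVec ybar i| < lam := by
    intro i h0
    rw [habsAy i]
    have := hii i h0
    calc N⁻¹ * |Aᵀ.mulVec (b - A.mulVec xbar) i| < N⁻¹ * (lam * N) := by
          exact mul_lt_mul_of_pos_left this (inv_pos.mpr hN)
      _ = lam := by field_simp
  have heq : ∀ i, xbar i ≠ 0 → |Aᵀ.mulVec ybar i| = lam := by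
    intro i hi
    rw [habsAy i, key_lemma A b lam hlam xbar hsol i hi hN, ← hNdef]
    field_simp [ne_of_gt hN]
  have hJ : {i : Fin n | |Aᵀ.mulVec ybar i| = lam} = {i : Fin n | xbar i ≠ 0} := by
    ext i
    simp only [Set.mem_setOf_eq]
    constructor
    · intro h
      intro h0
      exact absurd h (ne_of_lt (hlt i h0))
    · exact heq i
  refine ⟨hne, hJ, ?_, ?_⟩
  · intro u hu hAu
    refine hker u (fun i h0 => hu i (ne_of_lt (hlt i h0))) hAu
  · rintro ⟨u, hu, hAu⟩
    exact hrge ⟨u, fun i h0 => hu i (ne_of_lt (hlt i h0)), hAu⟩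
end
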